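/- arXiv:1403.3195 — 3 statements merged into one kernel-verified Lean document; each statement's English description precedes it below -/
import Mathlib

section
/- For ℓ > 0 and s ∈ [−X(ℓ), X(ℓ)] define ι_ℓ(s) = arsinh(sinh(ℓ/2)/cos(ℓ·s/(2π))). Then ρ_ℓ(s) = (ℓ/(2π·sinh(ℓ/2)))·sinh(ι_ℓ(s)) for every ℓ > 0 and s ∈ [−X(ℓ), X(ℓ)], and if moreover 0 < ℓ < 2·arsinh(1), then ρ_ℓ(s) ≤ ι_ℓ(s) ≤ π·ρ_ℓ(s) for every s ∈ [−X(ℓ), X(ℓ)]. -/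
/-!
Write `t = ℓ / 2` and `c = cos (ℓ s / 2π)`, so that `π ρ = t / c` and `sinh ι = sinh t / c`;
the identity is then immediate, and on the collar `tanh t ≤ c ≤ 1`. Both inequalities come from
the convexity of `sinh` on `[0, ∞)` in the form `sinh (a x) ≤ a sinh x` for `a ∈ [0, 1]`. With
`a = c` it gives `sinh t / c ≤ sinh (t / c)`, i.e. `ι ≤ π ρ`. With `a = ρ` it gives
`sinh ρ ≤ ρ sinh 1 ≤ π ρ = t / c ≤ sinh t / c = sinh ι`, provided `ρ ≤ 1`; this last bound
follows from `c ≥ tanh t` and `cosh t ≤ √2`, which is where `ℓ < 2 arsinh 1` enters.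
-/

/-- Half-length of the hyperbolic collar around a geodesic of length `ℓ`. -/
noncomputable def collarX (ℓ : ℝ) : ℝ :=
  2 * Real.pi / ℓ * (Real.pi / 2 - Real.arctan (Real.sinh (ℓ / 2)))

/-- Conformal factor of the hyperbolic collar. -/
noncomputable def collarRho (ℓ s : ℝ) : ℝ :=
  ℓ / (2 * Real.pi * Real.cos (ℓ * s / (2 * Real.pi)))

/-- Injectivity radius of the hyperbolic collar at coordinate `s`. -/
noncomputable def collarIota (ℓ s : ℝ) : ℝ :=
  Real.arsinh (Real.sinh (ℓ / 2) / Real.cos (ℓ * s / (2 * Real.pi)))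

namespace Real

open Set

theorem convexOn_sinh_Ici : ConvexOn ℝ (Ici 0) sinh := by
  refine MonotoneOn.convexOn_of_deriv (convex_Ici 0) continuous_sinh.continuousOn
    differentiable_sinh.differentiableOn ?_
  rw [deriv_sinh, interior_Ici]
  intro x hx y hy hxy
  rw [cosh_le_cosh, abs_of_pos hx, abs_of_pos hy]
  exact hxy

theorem sinh_mul_le_mul_sinh {a x : ℝ} (ha₀ : 0 ≤ a) (ha₁ : a ≤ 1) (hx : 0 ≤ x) :
    sinh (a * x) ≤ a * sinh x := by
  simpa using convexOn_sinh_Ici.2 (mem_Ici.2 hx) (mem_Ici.2 le_rfl) ha₀ (sub_nonneg.2 ha₁)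
    (add_sub_cancel a 1)

theorem sinh_one_lt_pi : sinh 1 < π := by
  rw [sinh_eq]
  linarith [exp_one_lt_d9, exp_pos (-1), pi_gt_three]

theorem cos_pi_div_two_sub_arctan_sinh (t : ℝ) : cos (π / 2 - arctan (sinh t)) = tanh t := by
  rw [cos_pi_div_two_sub, sin_arctan, ← cosh_sq', sqrt_sq (cosh_pos t).le, tanh_eq_sinh_div_cosh]

theorem tanh_pos {x : ℝ} (hx : 0 < x) : 0 < tanh x := by
  rw [tanh_eq_sinh_div_cosh]
  exact div_pos (sinh_pos_iff.2 hx) (cosh_pos x)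

theorem arsinh_sinh_div_le_div {t c : ℝ} (ht : 0 ≤ t) (hc₀ : 0 < c) (hc₁ : c ≤ 1) :
    arsinh (sinh t / c) ≤ t / c := by
  have hsinh : sinh t ≤ c * sinh (t / c) := by
    simpa only [mul_div_cancel₀ t hc₀.ne'] using
      sinh_mul_le_mul_sinh hc₀.le hc₁ (div_nonneg ht hc₀.le)
  calc arsinh (sinh t / c) ≤ arsinh (sinh (t / c)) :=
        arsinh_le_arsinh.2 ((div_le_iff₀' hc₀).2 hsinh)
    _ = t / c := arsinh_sinh _

theorem div_pi_mul_le_arsinh_sinh_div {t c : ℝ} (ht₀ : 0 < t) (ht₁ : sinh t ≤ 1)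
    (hc : tanh t ≤ c) : t / (π * c) ≤ arsinh (sinh t / c) := by
  have hc₀ : 0 < c := (tanh_pos ht₀).trans_le hc
  have hsinh : sinh t ≤ c * cosh t := by
    rwa [tanh_eq_sinh_div_cosh, div_le_iff₀ (cosh_pos t)] at hc
  have hcosh_sq : cosh t ^ 2 ≤ 2 := by nlinarith [cosh_sq' t, sinh_pos_iff.2 ht₀]
  have hcosh : cosh t ≤ π := by nlinarith [cosh_pos t, pi_gt_three]
  have ht_le : t ≤ sinh t := self_le_sinh_iff.2 ht₀.le
  have hr₁ : t / (π * c) ≤ 1 := by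
    rw [div_le_one (by positivity)]
    nlinarith
  rw [← arsinh_sinh (t / (π * c)), arsinh_le_arsinh]
  calc sinh (t / (π * c)) = sinh (t / (π * c) * 1) := by rw [mul_one]
    _ ≤ t / (π * c) * sinh 1 := sinh_mul_le_mul_sinh (by positivity) hr₁ zero_le_one
    _ ≤ t / (π * c) * π := by gcongr; exact sinh_one_lt_pi.le
    _ = t / c := by field_simp
    _ ≤ sinh t / c := by gcongr

end Real

section Collar

open Real

theorem collarRho_eq_mul_sinh_collarIota (ℓ s : ℝ) :
    collarRho ℓ s = ℓ / (2 * π * sinh (ℓ / 2)) * sinh (collarIota ℓ s) := by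
  rw [collarIota, sinh_arsinh, collarRho]
  rcases eq_or_ne ℓ 0 with rfl | hℓ
  · simp
  · have hsinh : sinh (ℓ / 2) ≠ 0 := by simpa using hℓ
    rw [div_mul_div_comm, mul_right_comm (2 * π), mul_div_mul_right _ _ hsinh]

theorem tanh_half_le_cos_of_mem_collar {ℓ s : ℝ} (hℓ : 0 < ℓ)
    (hs : s ∈ Set.Icc (-collarX ℓ) (collarX ℓ)) :
    tanh (ℓ / 2) ≤ cos (ℓ * s / (2 * π)) := by
  have hX : ℓ * collarX ℓ / (2 * π) = π / 2 - arctan (sinh (ℓ / 2)) := by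
    rw [collarX]; field_simp
  rw [← cos_pi_div_two_sub_arctan_sinh, ← hX, ← cos_abs (ℓ * s / (2 * π))]
  apply cos_le_cos_of_nonneg_of_le_pi (abs_nonneg _)
  · rw [hX]; linarith [neg_pi_div_two_lt_arctan (sinh (ℓ / 2))]
  · rw [abs_div, abs_mul, abs_of_pos hℓ, abs_of_pos (by positivity : 0 < 2 * π)]
    gcongr
    exact abs_le.2 hs

end Collar

/-- `ρ_ℓ(s) = (ℓ/(2π·sinh(ℓ/2)))·sinh(ι_ℓ(s))`, and for `0 < ℓ < 2·arsinh 1` the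
injectivity radius and conformal factor are comparable: `ρ_ℓ ≤ ι_ℓ ≤ π·ρ_ℓ`. -/
theorem collarRho_inj_comparable :
    (∀ ℓ : ℝ, 0 < ℓ → ∀ s ∈ Set.Icc (-(collarX ℓ)) (collarX ℓ),
      collarRho ℓ s = ℓ / (2 * Real.pi * Real.sinh (ℓ / 2)) * Real.sinh (collarIota ℓ s)) ∧
    (∀ ℓ : ℝ, 0 < ℓ → ℓ < 2 * Real.arsinh 1 →
      ∀ s ∈ Set.Icc (-(collarX ℓ)) (collarX ℓ),
        collarRho ℓ s ≤ collarIota ℓ s ∧ collarIota ℓ s ≤ Real.pi * collarRho ℓ s) := by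
  refine ⟨fun ℓ _ s _ => collarRho_eq_mul_sinh_collarIota ℓ s, fun ℓ hℓ hℓ₁ s hs => ?_⟩
  have hc := tanh_half_le_cos_of_mem_collar hℓ hs
  have ht : 0 < ℓ / 2 := half_pos hℓ
  have hc₀ : 0 < Real.cos (ℓ * s / (2 * Real.pi)) := (Real.tanh_pos ht).trans_le hc
  have hsinh : Real.sinh (ℓ / 2) ≤ 1 := by
    rw [← Real.sinh_arsinh 1, Real.sinh_le_sinh]
    linarith
  have hρ : collarRho ℓ s = ℓ / 2 / (Real.pi * Real.cos (ℓ * s / (2 * Real.pi))) := by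
    rw [collarRho, div_div, mul_assoc]
  constructor
  · rw [hρ, collarIota]
    exact Real.div_pi_mul_le_arsinh_sinh_div ht hsinh hc
  · rw [hρ, collarIota, ← mul_div_assoc, mul_div_mul_left _ _ Real.pi_ne_zero]
    exact Real.arsinh_sinh_div_le_div ht.le hc₀ (Real.cos_le_one _)
end

section
/- For every ℓ with 0 < ℓ < 2·arsinh(1) and all q, s ∈ [−X(ℓ), X(ℓ)], one has ρ_ℓ(s)^{−2}·e^{−2|s − q|/3} ≤ ρ_ℓ(q)^{−2}, where ρ_ℓ(s) = ℓ/(2π·cos(ℓ·s/(2π))) and X(ℓ) = (2π/ℓ)·(π/2 − arctan(sinh(ℓ/2))). Equivalently, for fixed q the function s ↦ ρ_ℓ(s)^{−2}·e^{−2|s−q|/3} on [−X(ℓ), X(ℓ)] is maximised at s = q. -/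
open Real Set

theorem abs_tan_le_tan_of_abs_le {x a : ℝ} (hxa : |x| ≤ a) (ha : a < π / 2) : |tan x| ≤ tan a := by
  have ha0 : 0 ≤ a := (abs_nonneg x).trans hxa
  have mem : ∀ y, |y| ≤ a → y ∈ Ioo (-(π / 2)) (π / 2) := fun y hy =>
    abs_lt.1 (hy.trans_lt ha)
  have hmono := fun y hy =>
    strictMonoOn_tan.monotoneOn (mem y hy) (mem a (abs_of_nonneg ha0).le)
  rw [abs_le']
  constructor
  · exact hmono x hxa (le_abs_self x |>.trans hxa)
  · rw [← tan_neg]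
    exact hmono (-x) (by rwa [abs_neg]) (neg_le_abs x |>.trans hxa)

theorem hasDerivAt_log_cos_mul {t u : ℝ} (h : cos (t * u) ≠ 0) :
    HasDerivAt (fun v => log (cos (t * v))) (-(tan (t * u) * t)) u := by
  have hcos : HasDerivAt (fun v => cos (t * v)) (-sin (t * u) * t) u := by
    simpa [Function.comp_def] using
      (hasDerivAt_cos (t * u)).comp u ((hasDerivAt_id u).const_mul t)
  refine ((hasDerivAt_log h).comp u hcos).congr_deriv ?_
  rw [tan_eq_sin_div_cos]
  field_simp

section LogCos

variable {t X : ℝ}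

theorem abs_mul_le_of_mem_Icc (ht : 0 ≤ t) {u : ℝ} (hu : u ∈ Icc (-X) X) : |t * u| ≤ t * X := by
  rw [abs_mul, abs_of_nonneg ht]
  exact mul_le_mul_of_nonneg_left (abs_le.2 hu) ht

theorem cos_mul_pos_of_mem_Icc (ht : 0 ≤ t) (htX : t * X < π / 2) {u : ℝ}
    (hu : u ∈ Icc (-X) X) : 0 < cos (t * u) :=
  cos_pos_of_mem_Ioo (abs_lt.1 ((abs_mul_le_of_mem_Icc ht hu).trans_lt htX))

theorem cos_mul_le_cos_mul_mul_exp (ht : 0 ≤ t) (htX : t * X < π / 2) {K q s : ℝ}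
    (hK : t * tan (t * X) ≤ K) (hq : q ∈ Icc (-X) X) (hs : s ∈ Icc (-X) X) :
    cos (t * s) ≤ cos (t * q) * exp (K * |s - q|) := by
  have hpos := fun u (hu : u ∈ Icc (-X) X) => cos_mul_pos_of_mem_Icc ht htX hu
  have hderiv : ∀ u ∈ Icc (-X) X, HasDerivWithinAt (fun v => log (cos (t * v)))
      (-(tan (t * u) * t)) (Icc (-X) X) u := fun u hu =>
    (hasDerivAt_log_cos_mul (hpos u hu).ne').hasDerivWithinAt
  have hbound : ∀ u ∈ Icc (-X) X, ‖-(tan (t * u) * t)‖ ≤ K := fun u hu => by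
    rw [norm_neg, norm_mul, Real.norm_eq_abs, Real.norm_eq_abs, abs_of_nonneg ht, mul_comm]
    exact (mul_le_mul_of_nonneg_left
      (abs_tan_le_tan_of_abs_le (abs_mul_le_of_mem_Icc ht hu) htX) ht).trans hK
  have hlip := (convex_Icc (-X) X).norm_image_sub_le_of_norm_hasDerivWithin_le hderiv hbound hq hs
  rw [Real.norm_eq_abs, Real.norm_eq_abs] at hlip
  have hlog : log (cos (t * s)) ≤ log (cos (t * q)) + K * |s - q| := by
    linarith [le_abs_self (log (cos (t * s)) - log (cos (t * q)))]
  calc cos (t * s) = exp (log (cos (t * s))) := (exp_log (hpos s hs)).symm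
    _ ≤ exp (log (cos (t * q)) + K * |s - q|) := exp_le_exp.2 hlog
    _ = cos (t * q) * exp (K * |s - q|) := by rw [exp_add, exp_log (hpos q hq)]

end LogCos

section Collar

variable {ℓ : ℝ}

theorem div_two_pi_mul_collarX (hℓ : ℓ ≠ 0) :
    ℓ / (2 * π) * collarX ℓ = π / 2 - arctan (sinh (ℓ / 2)) := by
  rw [collarX]
  field_simp

theorem div_two_pi_mul_collarX_lt (hℓ : 0 < ℓ) : ℓ / (2 * π) * collarX ℓ < π / 2 := by
  rw [div_two_pi_mul_collarX hℓ.ne']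
  have : 0 < arctan (sinh (ℓ / 2)) := arctan_pos.2 (sinh_pos_iff.2 (half_pos hℓ))
  linarith

theorem div_two_pi_mul_tan_collarX_le (hℓ : 0 < ℓ) :
    ℓ / (2 * π) * tan (ℓ / (2 * π) * collarX ℓ) ≤ 1 / π := by
  rw [div_two_pi_mul_collarX hℓ.ne', tan_pi_div_two_sub, tan_arctan]
  have hsinh : 0 < sinh (ℓ / 2) := sinh_pos_iff.2 (half_pos hℓ)
  have hle : ℓ / 2 ≤ sinh (ℓ / 2) := self_le_sinh_iff.2 (half_pos hℓ).le
  rw [← div_eq_mul_inv, div_div, div_le_div_iff₀ (by positivity) pi_pos]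
  nlinarith [pi_pos]

theorem inv_collarRho_sq (ℓ u : ℝ) :
    (collarRho ℓ u ^ 2)⁻¹ = (2 * π / ℓ) ^ 2 * cos (ℓ / (2 * π) * u) ^ 2 := by
  rw [collarRho, ← inv_pow, inv_div, div_mul_eq_mul_div]
  ring

end Collar

theorem collarRho_weight_maximised_general (ℓ : ℝ) (h0 : 0 < ℓ)
    (q s : ℝ) (hq : q ∈ Set.Icc (-(collarX ℓ)) (collarX ℓ))
    (hs : s ∈ Set.Icc (-(collarX ℓ)) (collarX ℓ)) :
    (collarRho ℓ s ^ 2)⁻¹ * Real.exp (-(2 * |s - q|) / 3) ≤ (collarRho ℓ q ^ 2)⁻¹ := by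
  set t := ℓ / (2 * π)
  have ht : 0 ≤ t := by positivity
  have hK : t * tan (t * collarX ℓ) ≤ 1 / 3 :=
    (div_two_pi_mul_tan_collarX_le h0).trans
      (one_div_le_one_div_of_le (by norm_num) pi_gt_three.le)
  have hcos : cos (t * s) ≤ cos (t * q) * exp (1 / 3 * |s - q|) :=
    cos_mul_le_cos_mul_mul_exp ht (div_two_pi_mul_collarX_lt h0) hK hq hs
  have hsq : cos (t * s) ^ 2 ≤ (cos (t * q) * exp (1 / 3 * |s - q|)) ^ 2 :=
    pow_le_pow_left₀ (cos_mul_pos_of_mem_Icc ht (div_two_pi_mul_collarX_lt h0) hs).le hcos 2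
  have hexp : exp (1 / 3 * |s - q|) ^ 2 * exp (-(2 * |s - q|) / 3) = 1 := by
    rw [← exp_nat_mul, ← exp_add]
    ring_nf
    exact exp_zero
  rw [inv_collarRho_sq, inv_collarRho_sq]
  calc (2 * π / ℓ) ^ 2 * cos (t * s) ^ 2 * exp (-(2 * |s - q|) / 3)
      ≤ (2 * π / ℓ) ^ 2 * (cos (t * q) * exp (1 / 3 * |s - q|)) ^ 2
          * exp (-(2 * |s - q|) / 3) := by gcongr
    _ = (2 * π / ℓ) ^ 2 * cos (t * q) ^ 2 := by
        rw [mul_pow, mul_assoc, mul_assoc, hexp, mul_one]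

/-- For fixed `q`, the function `s ↦ ρ_ℓ(s)⁻²·e^{-2|s-q|/3}` on `[-X(ℓ), X(ℓ)]`
is maximised at `s = q`. -/
theorem collarRho_weight_maximised (ℓ : ℝ) (h0 : 0 < ℓ) (h1 : ℓ < 2 * Real.arsinh 1)
    (q s : ℝ) (hq : q ∈ Set.Icc (-(collarX ℓ)) (collarX ℓ))
    (hs : s ∈ Set.Icc (-(collarX ℓ)) (collarX ℓ)) :
    (collarRho ℓ s ^ 2)⁻¹ * Real.exp (-(2 * |s - q|) / 3) ≤ (collarRho ℓ q ^ 2)⁻¹ :=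
  collarRho_weight_maximised_general ℓ h0 q s hq hs
end

section
/- For every ℓ with 0 < ℓ < 2·arsinh(1) and every s₀ ∈ [−X(ℓ), X(ℓ)], one has ρ_ℓ(s₀)^{−2}·e^{−(X(ℓ) − |s₀|)} ≤ π²·e^{−(X(ℓ) − |s₀|)/3}, where ρ_ℓ(s) = ℓ/(2π·cos(ℓ·s/(2π))) and X(ℓ) = (2π/ℓ)·(π/2 − arctan(sinh(ℓ/2))). -/
open Real

namespace Real

theorem sinh_le_mul_cosh {x : ℝ} (hx : 0 ≤ x) : sinh x ≤ x * cosh x := by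
  rcases hx.eq_or_lt with rfl | hx
  · simp
  obtain ⟨c, hc, hslope⟩ := exists_hasDerivAt_eq_slope sinh cosh hx continuous_sinh.continuousOn
    fun c _ ↦ hasDerivAt_sinh c
  have hcosh : cosh c ≤ cosh x :=
    cosh_le_cosh.2 (by rw [abs_of_pos hc.1, abs_of_pos hx]; exact hc.2.le)
  rw [sinh_zero, sub_zero, sub_zero, eq_div_iff hx.ne'] at hslope
  nlinarith

theorem tanh_le_self {x : ℝ} (hx : 0 ≤ x) : tanh x ≤ x := by
  rw [tanh_eq_sinh_div_cosh, div_le_iff₀ (cosh_pos x)]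
  exact sinh_le_mul_cosh hx

theorem sin_arctan_sinh (x : ℝ) : sin (arctan (sinh x)) = tanh x := by
  rw [sin_arctan, tanh_eq_sinh_div_cosh, ← cosh_sq', sqrt_sq (cosh_pos x).le]

end Real

theorem mul_collarX_div {ℓ : ℝ} (hℓ : ℓ ≠ 0) :
    ℓ * collarX ℓ / (2 * π) = π / 2 - arctan (sinh (ℓ / 2)) := by
  rw [collarX]
  field_simp

theorem cos_mul_collarX_div {ℓ : ℝ} (hℓ : ℓ ≠ 0) :
    cos (ℓ * collarX ℓ / (2 * π)) = tanh (ℓ / 2) := by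
  rw [mul_collarX_div hℓ, cos_pi_div_two_sub, sin_arctan_sinh]

theorem collarRho_inv (ℓ s : ℝ) : (collarRho ℓ s)⁻¹ = 2 * π * cos (ℓ * s / (2 * π)) / ℓ := by
  rw [collarRho, inv_div]

section Collar

variable {ℓ s : ℝ} (hℓ : 0 < ℓ) (hs : |s| ≤ collarX ℓ)
include hℓ hs

theorem abs_mul_div_le_collar_angle :
    |ℓ * s / (2 * π)| ≤ π / 2 - arctan (sinh (ℓ / 2)) := by
  rw [← mul_collarX_div hℓ.ne', abs_div, abs_mul, abs_of_pos hℓ, abs_of_pos two_pi_pos]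
  gcongr

theorem cos_collar_nonneg : 0 ≤ cos (ℓ * s / (2 * π)) := by
  have harctan : 0 ≤ arctan (sinh (ℓ / 2)) := arctan_nonneg.2 (sinh_nonneg_iff.2 (by positivity))
  have hangle := abs_le.1 (abs_mul_div_le_collar_angle hℓ hs)
  exact cos_nonneg_of_neg_pi_div_two_le_of_le (by linarith) (by linarith)

theorem cos_collar_le : cos (ℓ * s / (2 * π)) ≤ ℓ / 2 * (1 + (collarX ℓ - |s|) / 3) := by
  have hlip : cos (ℓ * |s| / (2 * π)) - cos (ℓ * collarX ℓ / (2 * π))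
      ≤ ℓ * (collarX ℓ - |s|) / (2 * π) := by
    refine (le_abs_self _).trans ((abs_cos_sub_cos_le _ _).trans_eq ?_)
    rw [abs_sub_comm, ← sub_div, ← mul_sub, abs_of_nonneg (by have := two_pi_pos; positivity)]
  have hend : cos (ℓ * collarX ℓ / (2 * π)) ≤ ℓ / 2 := by
    rw [cos_mul_collarX_div hℓ.ne']
    exact tanh_le_self (by positivity)
  have hpi : ℓ * (collarX ℓ - |s|) / (2 * π) ≤ ℓ * (collarX ℓ - |s|) / 6 := by
    have : 0 ≤ ℓ * (collarX ℓ - |s|) := mul_nonneg hℓ.le (sub_nonneg.2 hs)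
    gcongr
    linarith [pi_gt_three]
  have heven : cos (ℓ * s / (2 * π)) = cos (ℓ * |s| / (2 * π)) := by
    rw [← cos_abs, abs_div, abs_mul, abs_of_pos hℓ, abs_of_pos two_pi_pos]
  linarith

theorem collarRho_inv_le : (collarRho ℓ s)⁻¹ ≤ π * exp ((collarX ℓ - |s|) / 3) := by
  have hcos : cos (ℓ * s / (2 * π)) ≤ ℓ / 2 * exp ((collarX ℓ - |s|) / 3) :=
    (cos_collar_le hℓ hs).trans (by gcongr; linarith [add_one_le_exp ((collarX ℓ - |s|) / 3)])
  rw [collarRho_inv, div_le_iff₀ hℓ]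
  nlinarith [pi_pos]

end Collar

theorem collarRho_weight_end_bound_general (ℓ : ℝ) (h0 : 0 < ℓ)
    (s₀ : ℝ) (hs₀ : s₀ ∈ Set.Icc (-(collarX ℓ)) (collarX ℓ)) :
    (collarRho ℓ s₀ ^ 2)⁻¹ * Real.exp (-(collarX ℓ - |s₀|))
      ≤ Real.pi ^ 2 * Real.exp (-(collarX ℓ - |s₀|) / 3) := by
  set t := collarX ℓ - |s₀|
  have hs : |s₀| ≤ collarX ℓ := abs_le.2 hs₀
  have hnonneg : 0 ≤ (collarRho ℓ s₀)⁻¹ := by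
    rw [collarRho_inv]
    have := cos_collar_nonneg h0 hs
    positivity
  have hexp : exp (t / 3) ^ 2 * exp (-t) = exp (-t / 3) := by
    rw [← exp_nat_mul, ← exp_add]
    congr 1
    push_cast
    ring
  calc (collarRho ℓ s₀ ^ 2)⁻¹ * exp (-t)
      = ((collarRho ℓ s₀)⁻¹) ^ 2 * exp (-t) := by rw [inv_pow]
    _ ≤ (π * exp (t / 3)) ^ 2 * exp (-t) := by
        gcongr
        exact collarRho_inv_le h0 hs
    _ = π ^ 2 * exp (-t / 3) := by rw [mul_pow, mul_assoc, hexp]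

/-- `ρ_ℓ(s₀)⁻²·e^{-(X(ℓ)-|s₀|)} ≤ π²·e^{-(X(ℓ)-|s₀|)/3}` on the collar. -/
theorem collarRho_weight_end_bound (ℓ : ℝ) (h0 : 0 < ℓ) (h1 : ℓ < 2 * Real.arsinh 1)
    (s₀ : ℝ) (hs₀ : s₀ ∈ Set.Icc (-(collarX ℓ)) (collarX ℓ)) :
    (collarRho ℓ s₀ ^ 2)⁻¹ * Real.exp (-(collarX ℓ - |s₀|))
      ≤ Real.pi ^ 2 * Real.exp (-(collarX ℓ - |s₀|) / 3) :=
  collarRho_weight_end_bound_general ℓ h0 s₀ hs₀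
end
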